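/- arXiv:2505.22650 — 2 statements merged into one kernel-verified Lean document; each statement's English description precedes it below -/
import Mathlib

section
/- Let H be a finite set of hypotheses each labeling points of a domain Z with values in {YES, NO}, containing a target h* realizing a distribution D⁺ (i.e., h*(z) = YES for D⁺-almost every z). For each h ∈ H let p_h = Pr_{z∼D⁺}[h(z) = NO]. Draw S ∼ (D⁺)^m, let H_S = {h ∈ H : h(z) = YES for all z ∈ S}, and define h'(z) = AND over h ∈ H_S of h(z). Then with probability at least 1−δ over S, Pr_{z∼D⁺}[h'(z) = NO] ≤ (|H|·ln 2 + ln(1/δ))/m. -/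
open MeasureTheory

/-- Intersection-of-consistent-verifiers bound: drawing `m` i.i.d. positive examples
from `D⁺` (realized by `h* ∈ H`), the conjunction `h'` of all sample-consistent
hypotheses satisfies, with probability at least `1-δ`,
`Pr_{z∼D⁺}[h'(z) = NO] ≤ (|H|·ln 2 + ln(1/δ))/m`. -/
theorem stmt_7 {Z : Type*} [MeasurableSpace Z] (D : Measure Z) [IsProbabilityMeasure D]
    {H : Type*} [Fintype H] (f : H → Z → Bool) (hmeas : ∀ h, Measurable (f h))
    (hstar : H) (hre : D {z | f hstar z = false} = 0)
    (m : ℕ) (hm : 0 < m) (δ : ℝ) (hδ : 0 < δ) (hδ1 : δ < 1) :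
    (Measure.pi fun _ : Fin m => D)
      {s | (Fintype.card H * Real.log 2 + Real.log (1 / δ)) / m
            < (D {z | ∃ h : H, (∀ i, f h (s i) = true) ∧ f h z = false}).toReal}
      ≤ ENNReal.ofReal δ := by
  classical
  set n := Fintype.card H with hn
  set B : ℝ := (n * Real.log 2 + Real.log (1 / δ)) / m with hB
  set μ := Measure.pi fun _ : Fin m => D with hμ
  set U : Finset H → Set Z := fun T => {z | ∃ h ∈ T, f h z = false} with hUdef
  set G : Finset H → Set Z := fun T => {z | ∀ h ∈ T, f h z = true} with hGdef
  set C : Finset H → Set (Fin m → Z) := fun T => {s | ∀ i, s i ∈ G T} with hCdef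
  have hUmeas : ∀ T, MeasurableSet (U T) := by
    intro T
    have hU : U T = ⋃ h ∈ T, f h ⁻¹' {false} := by
      ext z; simp [hUdef]
    rw [hU]
    exact MeasurableSet.biUnion (Set.to_countable _)
      (fun h _ => (hmeas h) (measurableSet_singleton false))
  have hGU : ∀ T, G T = (U T)ᶜ := by
    intro T; ext z
    simp [hGdef, hUdef]
  have hq1 : ∀ T, (D (G T)).toReal = 1 - (D (U T)).toReal := by
    intro T
    have h1 : D (U T) + D (G T) = 1 := by
      rw [hGU T, measure_add_measure_compl (hUmeas T)]
      simp
    have h2 : (D (U T)).toReal + (D (G T)).toReal = 1 := by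
      rw [← ENNReal.toReal_add (measure_ne_top _ _) (measure_ne_top _ _), h1]
      simp
    linarith
  have hsub : {s : Fin m → Z | B < (D {z | ∃ h : H, (∀ i, f h (s i) = true) ∧ f h z = false}).toReal}
      ⊆ ⋃ T ∈ Finset.univ.filter (fun T : Finset H => B < (D (U T)).toReal), C T := by
    intro s hs
    set T := Finset.univ.filter (fun h : H => ∀ i, f h (s i) = true) with hT
    have hEU : {z | ∃ h : H, (∀ i, f h (s i) = true) ∧ f h z = false} = U T := by
      ext z
      simp [hUdef, hT]
    have hTmem : T ∈ Finset.univ.filter (fun T : Finset H => B < (D (U T)).toReal) := by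
      rw [Finset.mem_filter]
      exact ⟨Finset.mem_univ _, by rw [← hEU]; exact hs⟩
    refine Set.mem_biUnion hTmem ?_
    intro i h hh
    rw [hT, Finset.mem_filter] at hh
    exact hh.2 i
  have hC : ∀ T, μ (C T) = (D (G T)) ^ m := by
    intro T
    have hpi : C T = Set.pi Set.univ (fun _ : Fin m => G T) := by
      ext s; simp [hCdef, Set.mem_pi]
    rw [hpi, hμ, Measure.pi_pi]
    simp
  have hexpB : Real.exp (-((m:ℝ) * B)) = δ / 2 ^ n := by
    rw [hB]
    have hm' : (m:ℝ) ≠ 0 := by positivity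
    rw [mul_div_cancel₀ _ hm', neg_add, Real.exp_add]
    have e1 : Real.exp (-((n:ℝ) * Real.log 2)) = (2 ^ n)⁻¹ := by
      rw [Real.exp_neg, Real.exp_nat_mul, Real.exp_log (by norm_num : (0:ℝ) < 2)]
    have e2 : Real.exp (-Real.log (1/δ)) = δ := by
      rw [Real.exp_neg, Real.exp_log (by positivity : (0:ℝ) < 1/δ)]
      field_simp
    rw [e1, e2]
    ring
  have hkey : ∀ T ∈ Finset.univ.filter (fun T : Finset H => B < (D (U T)).toReal),
      μ (C T) ≤ ENNReal.ofReal (δ / 2 ^ n) := by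
    intro T hT
    rw [Finset.mem_filter] at hT
    set q := (D (U T)).toReal with hq
    have hq0 : 0 ≤ q := ENNReal.toReal_nonneg
    have hG1 : D (G T) ≤ ENNReal.ofReal (Real.exp (-q)) := by
      rw [← ENNReal.ofReal_toReal (measure_ne_top D (G T))]
      apply ENNReal.ofReal_le_ofReal
      rw [hq1 T]
      have := Real.add_one_le_exp (-q)
      linarith
    calc μ (C T) = (D (G T)) ^ m := hC T
      _ ≤ (ENNReal.ofReal (Real.exp (-q))) ^ m := pow_le_pow_left' hG1 m
      _ = ENNReal.ofReal ((Real.exp (-q)) ^ m) := by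
          rw [ENNReal.ofReal_pow (Real.exp_nonneg _)]
      _ ≤ ENNReal.ofReal (δ / 2 ^ n) := by
          apply ENNReal.ofReal_le_ofReal
          rw [← Real.exp_nat_mul, ← hexpB]
          apply Real.exp_le_exp.2
          have hBq : B ≤ q := le_of_lt hT.2
          have hm' : (0:ℝ) < m := by exact_mod_cast hm
          nlinarith
  calc μ _ ≤ μ (⋃ T ∈ Finset.univ.filter (fun T : Finset H => B < (D (U T)).toReal), C T) :=
        measure_mono hsub
    _ ≤ ∑ T ∈ Finset.univ.filter (fun T : Finset H => B < (D (U T)).toReal), μ (C T) :=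
        measure_biUnion_finset_le _ _
    _ ≤ ∑ T ∈ Finset.univ.filter (fun T : Finset H => B < (D (U T)).toReal),
          ENNReal.ofReal (δ / 2 ^ n) := Finset.sum_le_sum hkey
    _ ≤ ∑ _T ∈ (Finset.univ : Finset (Finset H)), ENNReal.ofReal (δ / 2 ^ n) :=
        Finset.sum_le_sum_of_subset (Finset.filter_subset _ _)
    _ = (2 ^ n : ℕ) * ENNReal.ofReal (δ / 2 ^ n) := by
        rw [Finset.sum_const, Finset.card_univ]
        simp [Fintype.card_finset, hn]
    _ = ENNReal.ofReal δ := by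
        rw [← ENNReal.ofReal_natCast, ← ENNReal.ofReal_mul (by positivity)]
        congr 1
        push_cast
        field_simp
end

section
/- Online verification for a one-dimensional hidden direction: Let h* ∈ ℝ^d be a nonzero vector. Instances are pairs (x₀, x₁) where x₀ is a finite set of vectors and x₁ ∈ ℝ^d; x₁ is valid iff x₁ ∈ span(x₀, h*). There is an online algorithm maintaining a subspace S* ⊇ span(h*) (initialized to ℝ^d) that makes at most d+1 mistakes in total: except possibly for the first mistake, every mistake strictly decreases dim(S*), and the invariant h* ∈ S* is preserved by every update. In particular, if S* ⊆ span(x₀), predicting 1[x₁ ∈ span(x₀)] is always correct; if a YES-prediction made when S* ⊆ span(x₀, x₁) and S* ⊄ span(x₀) is wrong, then h* ∈ span(x₀), so updating S* ← S* ∩ span(x₀) preserves the invariant and strictly decreases the dimension. -/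
/-!
Both kinds of mistake strictly shrink `S*` while keeping `h*` in it, by the exchange
property `u ∈ X ⊔ K ∙ v, u ∉ X ⊢ v ∈ X ⊔ K ∙ u`. A wrong YES means `x₁ ∉ span(x₀, h*)`,
so `x₁ ∉ span(x₀)` and the YES came from `S* ≤ span(x₀, x₁)`, `S* ⊄ span(x₀)`; exchange
gives `h* ∈ span(x₀)`. A wrong NO means `x₁ ∈ span(x₀, h*) \ span(x₀)`; exchange gives
`h* ∈ span(x₀, x₁)`, and `S* ≤ span(x₀, x₁)` is impossible since it would force
`S* ≤ span(x₀)`, hence `h* ∈ span(x₀)` and `x₁ ∈ span(x₀)`. So `dim S*` drops at every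
mistake and is at most `d`.
-/

open Module Submodule

theorem Nat.count_add_le_of_forall_succ_le {f : ℕ → ℕ} (p : ℕ → Prop) [DecidablePred p]
    (hle : ∀ t, f (t + 1) ≤ f t) (hlt : ∀ t, p t → f (t + 1) < f t) (N : ℕ) :
    Nat.count p N + f N ≤ f 0 := by
  induction N with
  | zero => simp
  | succ N ih =>
    rw [Nat.count_succ]
    split_ifs with hp
    · have := hlt N hp; omega
    · have := hle N; omega

theorem Set.ncard_setOf_lt_and (p : ℕ → Prop) [DecidablePred p] (N : ℕ) :
    {t | t < N ∧ p t}.ncard = Nat.count p N := by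
  rw [Nat.count_eq_card_filter_range, ← Set.ncard_coe_finset]
  congr 1
  ext t
  simp

section OnlineVerification

variable {K V : Type*} [DivisionRing K] [AddCommGroup V] [Module K V]
  {X S S' : Submodule K V} {u v x h : V} {p : Bool}

theorem Submodule.mem_sup_span_singleton_exchange (hu : u ∈ X ⊔ K ∙ v) (huX : u ∉ X) :
    v ∈ X ⊔ K ∙ u := by
  have hspan : ∀ w : V, X ⊔ K ∙ w = span K (insert w (X : Set V)) := fun w => by
    rw [span_insert, span_eq, sup_comm]
  rw [hspan] at hu ⊢
  exact mem_span_insert_exchange hu (by rwa [span_eq])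

theorem Submodule.sup_span_singleton_eq_left (hv : v ∈ X) : X ⊔ K ∙ v = X :=
  sup_eq_left.2 ((span_singleton_le_iff_mem v X).2 hv)

theorem mem_of_le_sup_span_singleton (hS : h ∈ S) (hle : S ≤ X ⊔ K ∙ x)
    (hx : x ∉ X ⊔ K ∙ h) : h ∈ X := by
  by_contra hX
  exact hx (mem_sup_span_singleton_exchange (hle hS) hX)

theorem le_sup_span_singleton_and_not_le_of_wrong_yes
    (hyes : x ∈ X ∨ (S ≤ X ⊔ K ∙ x ∧ ¬ S ≤ X)) (hx : x ∉ X ⊔ K ∙ h) :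
    S ≤ X ⊔ K ∙ x ∧ ¬ S ≤ X :=
  hyes.resolve_left fun hxX => hx (mem_sup_left hxX)

theorem mem_sup_span_singleton_and_not_le_of_wrong_no (hS : h ∈ S)
    (hno : ¬ (x ∈ X ∨ (S ≤ X ⊔ K ∙ x ∧ ¬ S ≤ X))) (hx : x ∈ X ⊔ K ∙ h) :
    h ∈ X ⊔ K ∙ x ∧ ¬ S ≤ X ⊔ K ∙ x := by
  obtain ⟨hxX, hS_le⟩ := not_or.1 hno
  replace hS_le := not_and_not_right.1 hS_le
  refine ⟨mem_sup_span_singleton_exchange hx hxX, fun hle => hxX ?_⟩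
  rwa [← sup_span_singleton_eq_left (hS_le hle hS)]

theorem mem_and_lt_of_mistake (hS : h ∈ S)
    (hpred : p = true ↔ (x ∈ X ∨ (S ≤ X ⊔ K ∙ x ∧ ¬ S ≤ X)))
    (hupd_yes : p = true → S' = S ⊓ X) (hupd_no : p = false → S' = S ⊓ (X ⊔ K ∙ x))
    (hmistake : ¬ (p = true ↔ x ∈ X ⊔ K ∙ h)) : h ∈ S' ∧ S' < S := by
  cases p with
  | true =>
    have hx : x ∉ X ⊔ K ∙ h := by simpa using hmistake
    obtain ⟨hle, hnle⟩ := le_sup_span_singleton_and_not_le_of_wrong_yes (hpred.1 rfl) hx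
    rw [hupd_yes rfl]
    exact ⟨mem_inf.2 ⟨hS, mem_of_le_sup_span_singleton hS hle hx⟩, inf_lt_left.2 hnle⟩
  | false =>
    have hx : x ∈ X ⊔ K ∙ h := by simpa using hmistake
    obtain ⟨hmem, hnle⟩ :=
      mem_sup_span_singleton_and_not_le_of_wrong_no hS (by simpa using hpred) hx
    rw [hupd_no rfl]
    exact ⟨mem_inf.2 ⟨hS, hmem⟩, inf_lt_left.2 hnle⟩

end OnlineVerification

theorem stmt_18_general (d : ℕ) (hstar : Fin d → ℝ)
    (X₀ : ℕ → Submodule ℝ (Fin d → ℝ)) (x₁ : ℕ → (Fin d → ℝ))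
    (predict : ℕ → Bool) (Sstar : ℕ → Submodule ℝ (Fin d → ℝ))
    (hS0 : Sstar 0 = ⊤)
    (hpred : ∀ t, predict t = true ↔
      (x₁ t ∈ X₀ t ∨ (Sstar t ≤ X₀ t ⊔ (ℝ ∙ x₁ t) ∧ ¬ Sstar t ≤ X₀ t)))
    (hupd_ok : ∀ t, ((predict t = true) ↔ x₁ t ∈ X₀ t ⊔ (ℝ ∙ hstar)) →
      Sstar (t + 1) = Sstar t)
    (hupd_yes : ∀ t, ¬ ((predict t = true) ↔ x₁ t ∈ X₀ t ⊔ (ℝ ∙ hstar)) →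
      predict t = true → Sstar (t + 1) = Sstar t ⊓ X₀ t)
    (hupd_no : ∀ t, ¬ ((predict t = true) ↔ x₁ t ∈ X₀ t ⊔ (ℝ ∙ hstar)) →
      predict t = false → Sstar (t + 1) = Sstar t ⊓ (X₀ t ⊔ (ℝ ∙ x₁ t))) :
    (∀ t, hstar ∈ Sstar t)
    ∧ (∀ t, Sstar t ≤ X₀ t → (x₁ t ∈ X₀ t ↔ x₁ t ∈ X₀ t ⊔ (ℝ ∙ hstar)))
    ∧ (∀ t, Sstar t ≤ X₀ t ⊔ (ℝ ∙ x₁ t) → ¬ Sstar t ≤ X₀ t →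
        x₁ t ∉ X₀ t ⊔ (ℝ ∙ hstar) → hstar ∈ X₀ t)
    ∧ (∀ t, (∃ t' < t, ¬ ((predict t' = true) ↔ x₁ t' ∈ X₀ t' ⊔ (ℝ ∙ hstar))) →
        ¬ ((predict t = true) ↔ x₁ t ∈ X₀ t ⊔ (ℝ ∙ hstar)) →
        finrank ℝ (Sstar (t + 1)) < finrank ℝ (Sstar t))
    ∧ (∀ N : ℕ,
        {t | t < N ∧ ¬ ((predict t = true) ↔ x₁ t ∈ X₀ t ⊔ (ℝ ∙ hstar))}.ncard
          ≤ d + 1) := by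
  classical
  have hstep t (hS : hstar ∈ Sstar t)
      (hm : ¬ ((predict t = true) ↔ x₁ t ∈ X₀ t ⊔ (ℝ ∙ hstar))) :=
    mem_and_lt_of_mistake hS (hpred t) (hupd_yes t hm) (hupd_no t hm) hm
  have hinv : ∀ t, hstar ∈ Sstar t := by
    intro t
    induction t with
    | zero => simp [hS0]
    | succ t ih =>
      by_cases hm : (predict t = true) ↔ x₁ t ∈ X₀ t ⊔ (ℝ ∙ hstar)
      · rwa [hupd_ok t hm]
      · exact (hstep t ih hm).1
  have hlt t (hm : ¬ ((predict t = true) ↔ x₁ t ∈ X₀ t ⊔ (ℝ ∙ hstar))) :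
      finrank ℝ (Sstar (t + 1)) < finrank ℝ (Sstar t) :=
    finrank_lt_finrank_of_lt (hstep t (hinv t) hm).2
  have hle t : finrank ℝ (Sstar (t + 1)) ≤ finrank ℝ (Sstar t) := by
    by_cases hm : (predict t = true) ↔ x₁ t ∈ X₀ t ⊔ (ℝ ∙ hstar)
    · rw [hupd_ok t hm]
    · exact (hlt t hm).le
  refine ⟨hinv, fun t hS => by rw [sup_span_singleton_eq_left (hS (hinv t))],
    fun t hS _ hx => mem_of_le_sup_span_singleton (hinv t) hS hx, fun t _ => hlt t, fun N => ?_⟩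
  have hd : finrank ℝ (Sstar 0) ≤ d := (finrank_le _).trans_eq (finrank_fin_fun ℝ)
  rw [Set.ncard_setOf_lt_and]
  have := Nat.count_add_le_of_forall_succ_le (f := fun t => finrank ℝ (Sstar t)) _ hle hlt N
  omega

/-- Online verification with a one-dimensional hidden direction `h*`: the
algorithm maintains a subspace `S*` (initially `ℝ^d`), predicts YES iff
`x₁ ∈ span(x₀)` or (`S* ≤ span(x₀, x₁)` and `S* ⊄ span(x₀)`), and on mistakes
intersects `S*` with `span(x₀)` (wrong YES) or `span(x₀, x₁)` (wrong NO). Then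
the invariant `h* ∈ S*` is preserved, the case-analysis claims hold (predicting
`1[x₁ ∈ span(x₀)]` is correct whenever `S* ≤ span(x₀)`; a wrong YES with
`S* ≤ span(x₀,x₁)`, `S* ⊄ span(x₀)` forces `h* ∈ span(x₀)`), every mistake
following an earlier mistake strictly decreases `dim S*`, and at most `d + 1`
mistakes are made in total. -/
theorem stmt_18 (d : ℕ) (hstar : Fin d → ℝ) (hns : hstar ≠ 0)
    (X₀ : ℕ → Submodule ℝ (Fin d → ℝ)) (x₁ : ℕ → (Fin d → ℝ))
    (predict : ℕ → Bool) (Sstar : ℕ → Submodule ℝ (Fin d → ℝ))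
    (hS0 : Sstar 0 = ⊤)
    (hpred : ∀ t, predict t = true ↔
      (x₁ t ∈ X₀ t ∨ (Sstar t ≤ X₀ t ⊔ (ℝ ∙ x₁ t) ∧ ¬ Sstar t ≤ X₀ t)))
    (hupd_ok : ∀ t, ((predict t = true) ↔ x₁ t ∈ X₀ t ⊔ (ℝ ∙ hstar)) →
      Sstar (t + 1) = Sstar t)
    (hupd_yes : ∀ t, ¬ ((predict t = true) ↔ x₁ t ∈ X₀ t ⊔ (ℝ ∙ hstar)) →
      predict t = true → Sstar (t + 1) = Sstar t ⊓ X₀ t)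
    (hupd_no : ∀ t, ¬ ((predict t = true) ↔ x₁ t ∈ X₀ t ⊔ (ℝ ∙ hstar)) →
      predict t = false → Sstar (t + 1) = Sstar t ⊓ (X₀ t ⊔ (ℝ ∙ x₁ t))) :
    (∀ t, hstar ∈ Sstar t)
    ∧ (∀ t, Sstar t ≤ X₀ t → (x₁ t ∈ X₀ t ↔ x₁ t ∈ X₀ t ⊔ (ℝ ∙ hstar)))
    ∧ (∀ t, Sstar t ≤ X₀ t ⊔ (ℝ ∙ x₁ t) → ¬ Sstar t ≤ X₀ t →
        x₁ t ∉ X₀ t ⊔ (ℝ ∙ hstar) → hstar ∈ X₀ t)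
    ∧ (∀ t, (∃ t' < t, ¬ ((predict t' = true) ↔ x₁ t' ∈ X₀ t' ⊔ (ℝ ∙ hstar))) →
        ¬ ((predict t = true) ↔ x₁ t ∈ X₀ t ⊔ (ℝ ∙ hstar)) →
        finrank ℝ (Sstar (t + 1)) < finrank ℝ (Sstar t))
    ∧ (∀ N : ℕ,
        {t | t < N ∧ ¬ ((predict t = true) ↔ x₁ t ∈ X₀ t ⊔ (ℝ ∙ hstar))}.ncard
          ≤ d + 1) :=
  stmt_18_general d hstar X₀ x₁ predict Sstar hS0 hpred hupd_ok hupd_yes hupd_no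
end
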